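/- arXiv:dg-ga/9603012 — 5 statements merged into one kernel-verified Lean document; each statement's English description precedes it below -/
import Mathlib

section
/- Let c be a nonzero real number and a₁, a₂, a₃ real numbers. If a₁·(cosh(t+1) + c) + a₂·(cosh t + c) + a₃·(cosh(t−1) + c) = 0 for every real number t, then a₁ = a₂ = a₃ = 0. -/
/-- If `c ≠ 0` and `a₁·(cosh(t+1)+c) + a₂·(cosh t + c) + a₃·(cosh(t−1)+c) = 0`
for all real `t`, then `a₁ = a₂ = a₃ = 0`. -/
theorem stmt_1 (c a₁ a₂ a₃ : ℝ) (hc : c ≠ 0)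
    (h : ∀ t : ℝ, a₁ * (Real.cosh (t + 1) + c) + a₂ * (Real.cosh t + c)
      + a₃ * (Real.cosh (t - 1) + c) = 0) :
    a₁ = 0 ∧ a₂ = 0 ∧ a₃ = 0 := by
  set x := Real.cosh 1 with hxdef
  have hx : 1 < x := by
    have := Real.one_lt_cosh.mpr (by norm_num : (1:ℝ) ≠ 0)
    simp [hxdef, this]
  have h2 : Real.cosh 2 = 2 * x ^ 2 - 1 := by
    rw [show (2:ℝ) = 1 + 1 by norm_num, Real.cosh_add]
    have hs : Real.sinh 1 ^ 2 = x ^ 2 - 1 := Real.sinh_sq 1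
    nlinarith [hs]
  have h0 := h 0
  have h1 := h 1
  have hm1 := h (-1)
  rw [show (0:ℝ) + 1 = 1 by ring, show (0:ℝ) - 1 = -1 by ring, Real.cosh_neg,
    Real.cosh_zero] at h0
  rw [show (1:ℝ) + 1 = 2 by ring, show (1:ℝ) - 1 = 0 by ring, Real.cosh_zero, h2] at h1
  rw [show (-1:ℝ) + 1 = 0 by ring, show (-1:ℝ) - 1 = -(2:ℝ) by ring] at hm1
  simp only [Real.cosh_neg] at hm1
  rw [Real.cosh_zero, h2] at hm1
  rw [← hxdef] at h0 h1 hm1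
  have hx1 : x - 1 ≠ 0 := by nlinarith
  have e1 : a₁ = a₃ := by
    have key : (2 * x ^ 2 - 2) * (a₁ - a₃) = 0 := by linear_combination h1 - hm1
    have hne : (2 * x ^ 2 - 2) ≠ 0 := by nlinarith
    have := (mul_eq_zero.mp key).resolve_left hne
    linarith
  have e2 : 2 * x * a₁ + a₂ = 0 := by
    have key : (x - 1) * (2 * x * a₁ + a₂) = 0 := by
      linear_combination h1 - h0 + (1 - x) * e1
    have := (mul_eq_zero.mp key).resolve_left hx1
    linarith
  have e3 : a₁ = 0 := by
    have key : (2 * c * (1 - x)) * a₁ = 0 := by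
      linear_combination h0 - (1 + c) * e2 + (x + c) * e1
    have hne : (2 * c * (1 - x)) ≠ 0 := by
      apply mul_ne_zero (mul_ne_zero (by norm_num) hc)
      intro hh; apply hx1; linarith
    exact (mul_eq_zero.mp key).resolve_left hne
  refine ⟨e3, ?_, by rw [← e1, e3]⟩
  have := e2
  rw [e3] at this
  linarith
end

section
/- Let λ and c be real numbers, let Θ : (0,∞) → ℝ be positive and differentiable, and set f(r) = cosh r + c. If f''(r) + (Θ'(r)/Θ(r))·f'(r) + λ·f(r) = 0 for all r > 0, then there exists a constant C > 0 such that Θ(r) = C · (sinh(r/2))^{−(1+λ+cλ)} · (cosh(r/2))^{−(1+λ−cλ)} for all r > 0. -/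
/-!
Solving the ODE for `Θ'/Θ` gives `Θ'/Θ = -((1 + λ) cosh r + cλ) / sinh r`. Writing
`cosh r = cosh²(r/2) + sinh²(r/2)` and `1 = cosh²(r/2) - sinh²(r/2)`, the right-hand side is
`-(a/2) coth(r/2) - (b/2) tanh(r/2)` with `a = 1 + λ + cλ`, `b = 1 + λ - cλ`, i.e. minus the
logarithmic derivative of `w = sinh(r/2)^a cosh(r/2)^b`. Hence `Θ w` has zero derivative on `(0, ∞)`
and is a positive constant.
-/

open Real Set

lemma hasDerivAt_sinh_half_rpow_mul_cosh_half_rpow (a b : ℝ) {r : ℝ} (hr : 0 < r) :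
    HasDerivAt (fun x => sinh (x / 2) ^ a * cosh (x / 2) ^ b)
      (((a + b) / 2 * cosh r + (a - b) / 2) / sinh r * (sinh (r / 2) ^ a * cosh (r / 2) ^ b)) r := by
  have hs : 0 < sinh (r / 2) := sinh_pos_iff.2 (by positivity)
  have hc : 0 < cosh (r / 2) := cosh_pos _
  have hsinh : HasDerivAt (fun x => sinh (x / 2)) (cosh (r / 2) * (1 / 2)) r :=
    (hasDerivAt_sinh _).comp r ((hasDerivAt_id r).div_const 2)
  have hcosh : HasDerivAt (fun x => cosh (x / 2)) (sinh (r / 2) * (1 / 2)) r :=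
    (hasDerivAt_cosh _).comp r ((hasDerivAt_id r).div_const 2)
  refine ((hsinh.rpow_const (p := a) (Or.inl hs.ne')).mul
    (hcosh.rpow_const (p := b) (Or.inl hc.ne'))).congr_deriv ?_
  have hsinh_two : sinh r = 2 * sinh (r / 2) * cosh (r / 2) := by
    rw [← sinh_two_mul]; ring_nf
  have hcosh_two : cosh r = cosh (r / 2) ^ 2 + sinh (r / 2) ^ 2 := by
    rw [← cosh_two_mul]; ring_nf
  have hpyth := cosh_sq_sub_sinh_sq (r / 2)
  rw [rpow_sub hs, rpow_sub hc, rpow_one, rpow_one, hsinh_two, hcosh_two]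
  field_simp
  linear_combination (a - b) * hpyth

lemma exists_pos_eq_div_of_hasDerivAt_eq_neg_logDeriv_mul {s : Set ℝ} (hs : IsOpen s)
    (hs' : IsPreconnected s) {x₀ : ℝ} (hx₀ : x₀ ∈ s) {Θ w : ℝ → ℝ}
    (hΘpos : ∀ r ∈ s, 0 < Θ r) (hΘdiff : ∀ r ∈ s, DifferentiableAt ℝ Θ r)
    (hwpos : ∀ r ∈ s, 0 < w r) (hw : ∀ r ∈ s, HasDerivAt w (-(deriv Θ r / Θ r) * w r) r) :
    ∃ C > 0, ∀ r ∈ s, Θ r = C / w r := by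
  have hderiv : ∀ r ∈ s, HasDerivAt (fun x => Θ x * w x) 0 r := fun r hr => by
    refine ((hΘdiff r hr).hasDerivAt.mul (hw r hr)).congr_deriv ?_
    field_simp [(hΘpos r hr).ne']
    ring
  have hconst : ∀ r ∈ s, Θ r * w r = Θ x₀ * w x₀ := fun r hr =>
    hs.is_const_of_deriv_eq_zero hs' (fun x hx => (hderiv x hx).differentiableAt.differentiableWithinAt)
      (fun x hx => (hderiv x hx).deriv) hr hx₀
  refine ⟨Θ x₀ * w x₀, mul_pos (hΘpos x₀ hx₀) (hwpos x₀ hx₀), fun r hr => ?_⟩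
  rw [← hconst r hr, mul_div_cancel_right₀ _ (hwpos r hr).ne']

/-- If `Θ > 0` is differentiable on `(0,∞)` and `f(r) = cosh r + c` satisfies
`f'' + (Θ'/Θ)·f' + λ·f = 0` there, then
`Θ(r) = C·(sinh(r/2))^{−(1+λ+cλ)}·(cosh(r/2))^{−(1+λ−cλ)}` for some `C > 0`. -/
theorem stmt_4 (lam c : ℝ) (Θ : ℝ → ℝ)
    (hΘpos : ∀ r > 0, 0 < Θ r)
    (hΘdiff : ∀ r > 0, DifferentiableAt ℝ Θ r)
    (hode : ∀ r > 0,
      Real.cosh r + (deriv Θ r / Θ r) * Real.sinh r + lam * (Real.cosh r + c) = 0) :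
    ∃ C > 0, ∀ r > 0,
      Θ r = C * Real.sinh (r / 2) ^ (-(1 + lam + c * lam))
              * Real.cosh (r / 2) ^ (-(1 + lam - c * lam)) := by
  set a := 1 + lam + c * lam
  set b := 1 + lam - c * lam
  have hsinh_pos : ∀ r > 0, 0 < sinh (r / 2) := fun r hr => sinh_pos_iff.2 (by positivity)
  have hlogDeriv : ∀ r > 0, deriv Θ r / Θ r = -((1 + lam) * cosh r + c * lam) / sinh r :=
    fun r hr => by
      rw [eq_div_iff (sinh_pos_iff.2 hr).ne']
      linear_combination hode r hr
  obtain ⟨C, hC, hΘ⟩ := exists_pos_eq_div_of_hasDerivAt_eq_neg_logDeriv_mul isOpen_Ioi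
    isPreconnected_Ioi (mem_Ioi.2 one_pos) hΘpos hΘdiff
    (w := fun x => sinh (x / 2) ^ a * cosh (x / 2) ^ b)
    (fun r hr => mul_pos (rpow_pos_of_pos (hsinh_pos r hr) a) (rpow_pos_of_pos (cosh_pos _) b))
    (fun r hr => by
      convert hasDerivAt_sinh_half_rpow_mul_cosh_half_rpow a b hr using 2
      rw [hlogDeriv r hr]
      ring)
  refine ⟨C, hC, fun r hr => ?_⟩
  rw [hΘ r hr, rpow_neg (hsinh_pos r hr).le, rpow_neg (cosh_pos _).le]
  ring
end

section
/- Let n ≥ 2 be an integer, λ and c real numbers, and let Θ : (0,∞) → ℝ be positive and differentiable with (cosh r + c)'' + (Θ'(r)/Θ(r))·(cosh r + c)' + λ·(cosh r + c) = 0 for all r > 0 (i.e. Θ'(r)/Θ(r)·sinh r = −(1+λ)cosh r − cλ). If in addition Θ(r)/r^{n−1} tends to 1 as r → 0⁺, then 1 + λ + cλ = 1 − n, and Θ(r) = 2^{n−1} · (sinh(r/2))^{n−1} · (cosh(r/2))^{n−1+2cλ} for all r > 0. -/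
open Filter Topology Real

/-!
Since `sinh r = 2 sinh(r/2) cosh(r/2)` and `1 = cosh²(r/2) − sinh²(r/2)`, the logarithmic
derivative `(−(1+λ) cosh r − cλ) / sinh r` of `Θ` equals `(α cosh²(r/2) + β sinh²(r/2)) / sinh r`
with `α = −(1+λ+cλ)` and `β = α + 2cλ`, which is the derivative of
`α log sinh(r/2) + β log cosh(r/2)`.
Hence `Θ = C sinh(r/2)^α cosh(r/2)^β` for some `C > 0`, so `Θ(r) ~ C 2^{-α} r^α` as `r → 0⁺`.
Comparing with `Θ(r) ~ r^{n−1}` forces `α = n − 1` and `C = 2^{n−1}`.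
-/

theorem exists_eq_mul_exp_of_logDeriv_eq {s : Set ℝ} (hs : IsOpen s) (hs' : IsPreconnected s)
    {f G g : ℝ → ℝ} (hf : ∀ x ∈ s, 0 < f x) (hfd : ∀ x ∈ s, DifferentiableAt ℝ f x)
    (hG : ∀ x ∈ s, HasDerivAt G (g x) x) (h : ∀ x ∈ s, logDeriv f x = g x) :
    ∃ C > 0, ∀ x ∈ s, f x = C * exp (G x) := by
  have hD : ∀ x ∈ s, HasDerivAt (fun x => log (f x) - G x) 0 x := fun x hx => by
    simpa [← h x hx, logDeriv_apply] using
      ((hfd x hx).hasDerivAt.log (hf x hx).ne').fun_sub (hG x hx)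
  obtain ⟨K, hK⟩ := hs.exists_is_const_of_deriv_eq_zero hs'
    (fun x hx => (hD x hx).differentiableAt.differentiableWithinAt) (fun x hx => (hD x hx).deriv)
  refine ⟨exp K, exp_pos K, fun x hx => ?_⟩
  rw [← exp_add, ← hK x hx, sub_add_cancel, exp_log (hf x hx)]

theorem sinh_eq_two_mul_sinh_half_mul_cosh_half (r : ℝ) :
    sinh r = 2 * sinh (r / 2) * cosh (r / 2) := by
  rw [← sinh_two_mul]; ring_nf

theorem cosh_eq_cosh_half_sq_add_sinh_half_sq (r : ℝ) :
    cosh r = cosh (r / 2) ^ 2 + sinh (r / 2) ^ 2 := by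
  rw [← cosh_two_mul]; ring_nf

theorem hasDerivAt_log_sinh_half_add_log_cosh_half (α β : ℝ) {r : ℝ} (hr : r ≠ 0) :
    HasDerivAt (fun r => α * log (sinh (r / 2)) + β * log (cosh (r / 2)))
      ((α * cosh (r / 2) ^ 2 + β * sinh (r / 2) ^ 2) / sinh r) r := by
  have hs : sinh (r / 2) ≠ 0 := sinh_ne_zero.2 (by simpa using hr)
  have hc : cosh (r / 2) ≠ 0 := (cosh_pos _).ne'
  have hhalf : HasDerivAt (fun r : ℝ => r / 2) (1 / 2) r := by
    simpa using (hasDerivAt_id r).div_const 2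
  have h1 := hhalf.sinh.log hs
  have h2 := hhalf.cosh.log hc
  refine ((h1.const_mul α).fun_add (h2.const_mul β)).congr_deriv ?_
  rw [sinh_eq_two_mul_sinh_half_mul_cosh_half r]
  field_simp

theorem exists_eq_mul_sinh_half_rpow_mul_cosh_half_rpow {Θ : ℝ → ℝ} {a b : ℝ}
    (hΘpos : ∀ r > 0, 0 < Θ r) (hΘdiff : ∀ r > 0, DifferentiableAt ℝ Θ r)
    (hode : ∀ r > 0, logDeriv Θ r * sinh r = -a * cosh r - b) :
    ∃ C > 0, ∀ r > 0, Θ r = C * (sinh (r / 2) ^ (-(a + b)) * cosh (r / 2) ^ (b - a)) := by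
  have hlogDeriv : ∀ r ∈ Set.Ioi (0 : ℝ), logDeriv Θ r =
      (-(a + b) * cosh (r / 2) ^ 2 + (b - a) * sinh (r / 2) ^ 2) / sinh r := fun r hr => by
    rw [eq_div_iff (sinh_pos_iff.2 hr).ne', hode r hr, cosh_eq_cosh_half_sq_add_sinh_half_sq r]
    linear_combination b * cosh_sq_sub_sinh_sq (r / 2)
  obtain ⟨C, hC, hΘ⟩ := exists_eq_mul_exp_of_logDeriv_eq isOpen_Ioi isPreconnected_Ioi hΘpos
    hΘdiff (fun r hr => hasDerivAt_log_sinh_half_add_log_cosh_half _ _ (ne_of_gt hr)) hlogDeriv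
  refine ⟨C, hC, fun r hr => ?_⟩
  rw [hΘ r hr, rpow_def_of_pos (sinh_pos_iff.2 (half_pos hr)), rpow_def_of_pos (cosh_pos _),
    ← exp_add]
  ring_nf

theorem tendsto_sinh_half_div_self :
    Tendsto (fun r => sinh (r / 2) / r) (𝓝[≠] 0) (𝓝 (1 / 2)) := by
  have h := (hasDerivAt_id (0 : ℝ)).div_const 2 |>.sinh
  rw [hasDerivAt_iff_tendsto_slope_zero] at h
  simpa [div_eq_inv_mul] using h

theorem tendsto_sinh_half_rpow_mul_cosh_half_rpow_div_rpow (α β : ℝ) :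
    Tendsto (fun r => sinh (r / 2) ^ α * cosh (r / 2) ^ β / r ^ α) (𝓝[>] 0)
      (𝓝 ((1 / 2) ^ α)) := by
  have hsinh := (tendsto_sinh_half_div_self.mono_left (nhdsGT_le_nhdsNE 0)).rpow_const
    (p := α) (Or.inl (by norm_num))
  have hcosh : Tendsto (fun r => cosh (r / 2) ^ β) (𝓝[>] 0) (𝓝 1) := by
    have h : Continuous fun r : ℝ => cosh (r / 2) ^ β :=
      (continuous_cosh.comp (continuous_id.div_const 2)).rpow_const
        fun _ => Or.inl (cosh_pos _).ne'
    simpa using (h.tendsto 0).mono_left nhdsWithin_le_nhds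
  rw [← mul_one ((1 / 2 : ℝ) ^ α)]
  refine (hsinh.mul hcosh).congr' ?_
  filter_upwards [self_mem_nhdsWithin] with r (hr : 0 < r)
  rw [div_rpow (sinh_pos_iff.2 (half_pos hr)).le hr.le]
  ring

theorem eq_zero_of_tendsto_rpow_nhdsGT_zero {p L : ℝ} (hL : L ≠ 0)
    (h : Tendsto (fun r => r ^ p) (𝓝[>] 0) (𝓝 L)) : p = 0 := by
  have tendsto_zero : ∀ q : ℝ, 0 < q → Tendsto (fun r : ℝ => r ^ q) (𝓝[>] 0) (𝓝 0) :=
    fun q hq => by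
    simpa [zero_rpow hq.ne'] using
      (continuousAt_rpow_const 0 q (Or.inr hq.le)).tendsto.mono_left nhdsWithin_le_nhds
  rcases lt_trichotomy p 0 with hp | hp | hp
  · have h1 : Tendsto (fun r : ℝ => r ^ p * r ^ (-p)) (𝓝[>] 0) (𝓝 1) := by
      refine tendsto_const_nhds.congr' ?_
      filter_upwards [self_mem_nhdsWithin] with r (hr : 0 < r)
      rw [← rpow_add hr, add_neg_cancel, rpow_zero]
    have := tendsto_nhds_unique h1 (h.mul (tendsto_zero (-p) (neg_pos.2 hp)))
    simp at this
  · exact hp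
  · exact absurd (tendsto_nhds_unique h (tendsto_zero p hp)) hL

theorem eq_of_tendsto_div_rpow_nhdsGT_zero {f : ℝ → ℝ} {p q L M : ℝ} (hL : L ≠ 0) (hM : M ≠ 0)
    (hp : Tendsto (fun r => f r / r ^ p) (𝓝[>] 0) (𝓝 L))
    (hq : Tendsto (fun r => f r / r ^ q) (𝓝[>] 0) (𝓝 M)) : p = q ∧ L = M := by
  have hratio : Tendsto (fun r => r ^ (p - q)) (𝓝[>] 0) (𝓝 (M / L)) := by
    refine (hq.div hp hL).congr' ?_
    filter_upwards [self_mem_nhdsWithin, hp.eventually_ne hL] with r (hr : 0 < r) hfr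
    have hf : f r ≠ 0 := fun h0 => hfr (by simp [h0])
    rw [Pi.div_apply, rpow_sub hr]
    field_simp
  have hpq := eq_zero_of_tendsto_rpow_nhdsGT_zero (div_ne_zero hM hL) hratio
  refine ⟨sub_eq_zero.1 hpq, ?_⟩
  simp only [hpq, rpow_zero] at hratio
  exact ((div_eq_one_iff_eq hL).1 (tendsto_nhds_unique hratio tendsto_const_nhds)).symm

theorem stmt_5_general (n : ℕ) (lam c : ℝ) (Θ : ℝ → ℝ)
    (hΘpos : ∀ r > 0, 0 < Θ r)
    (hΘdiff : ∀ r > 0, DifferentiableAt ℝ Θ r)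
    (hode : ∀ r > 0,
      (deriv Θ r / Θ r) * Real.sinh r = -(1 + lam) * Real.cosh r - c * lam)
    (hlim : Tendsto (fun r : ℝ => Θ r / r ^ ((n : ℝ) - 1)) (𝓝[>] 0) (𝓝 1)) :
    1 + lam + c * lam = 1 - n ∧
    ∀ r > 0, Θ r = 2 ^ ((n : ℝ) - 1) * Real.sinh (r / 2) ^ ((n : ℝ) - 1)
      * Real.cosh (r / 2) ^ ((n : ℝ) - 1 + 2 * c * lam) := by
  obtain ⟨C, hCpos, hΘ⟩ := exists_eq_mul_sinh_half_rpow_mul_cosh_half_rpow hΘpos hΘdiff hode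
  set α := -(1 + lam + c * lam)
  have hasymp : Tendsto (fun r => Θ r / r ^ α) (𝓝[>] 0) (𝓝 (C * (1 / 2) ^ α)) := by
    refine ((tendsto_sinh_half_rpow_mul_cosh_half_rpow_div_rpow α (c * lam - (1 + lam))).const_mul
      C).congr' ?_
    filter_upwards [self_mem_nhdsWithin] with r (hr : 0 < r)
    rw [hΘ r hr]
    ring
  obtain ⟨hα, hcoeff⟩ :=
    eq_of_tendsto_div_rpow_nhdsGT_zero one_ne_zero (by positivity) hlim hasymp
  have hC : C = 2 ^ ((n : ℝ) - 1) := by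
    rwa [← hα, one_div, inv_rpow zero_le_two, eq_comm, mul_inv_eq_one₀ (by positivity)] at hcoeff
  refine ⟨by linarith, fun r hr => ?_⟩
  rw [hΘ r hr, hC, show c * lam - (1 + lam) = (n : ℝ) - 1 + 2 * c * lam by linarith, ← hα]
  ring

/-- With the ODE `(Θ'/Θ)·sinh r = −(1+λ)cosh r − cλ` on `(0,∞)` and the
normalization `Θ(r)/r^{n−1} → 1` as `r → 0⁺`, one gets `1+λ+cλ = 1−n` and
`Θ(r) = 2^{n−1}·(sinh(r/2))^{n−1}·(cosh(r/2))^{n−1+2cλ}`. -/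
theorem stmt_5 (n : ℕ) (hn : 2 ≤ n) (lam c : ℝ) (Θ : ℝ → ℝ)
    (hΘpos : ∀ r > 0, 0 < Θ r)
    (hΘdiff : ∀ r > 0, DifferentiableAt ℝ Θ r)
    (hode : ∀ r > 0,
      (deriv Θ r / Θ r) * Real.sinh r = -(1 + lam) * Real.cosh r - c * lam)
    (hlim : Tendsto (fun r : ℝ => Θ r / r ^ ((n : ℝ) - 1)) (𝓝[>] 0) (𝓝 1)) :
    1 + lam + c * lam = 1 - n ∧
    ∀ r > 0, Θ r = 2 ^ ((n : ℝ) - 1) * Real.sinh (r / 2) ^ ((n : ℝ) - 1)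
      * Real.cosh (r / 2) ^ ((n : ℝ) - 1 + 2 * c * lam) :=
  stmt_5_general n lam c Θ hΘpos hΘdiff hode hlim
end

section
/- Let n ≥ 2 be an integer, λ a real number, and Θ : (0,∞) → ℝ positive and differentiable with Θ'(r)/Θ(r) = −(1+λ)·cosh r/sinh r for all r > 0. If Θ(r)/r^{n−1} tends to 1 as r → 0⁺, then λ = −n and Θ(r) = (sinh r)^{n−1} for all r > 0. -/
/-!
Since `logDeriv (sinh ^ m) = m cosh / sinh`, the equation says that `Θ` and `sinh ^ m`, with
`m = -(1 + λ)`, have the same logarithmic derivative on `(0, ∞)`, so `Θ = C sinh ^ m`. As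
`sinh r ~ r` at `0`, the normalisation becomes `C r ^ (m - (n - 1)) → 1`, which forces `C = 1` and
`m = n - 1`.
-/

open Filter Topology

open Real in
theorem logDeriv_fun_rpow_const {f : ℝ → ℝ} {x : ℝ} (hf : DifferentiableAt ℝ f x)
    (hfx : 0 < f x) (p : ℝ) : logDeriv (fun y => f y ^ p) x = p * logDeriv f x := by
  rw [logDeriv_apply, (hf.hasDerivAt.rpow_const (.inl hfx.ne')).deriv, logDeriv_apply,
    rpow_sub_one hfx.ne']
  field_simp [(rpow_pos_of_pos hfx p).ne']

theorem exists_eq_const_mul_sinh_rpow_of_logDeriv_eq {Θ : ℝ → ℝ} {m : ℝ}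
    (hΘpos : ∀ r > 0, 0 < Θ r) (hΘdiff : ∀ r > 0, DifferentiableAt ℝ Θ r)
    (hode : ∀ r > 0, logDeriv Θ r = m * Real.cosh r / Real.sinh r) :
    ∃ C, ∀ r > 0, Θ r = C * Real.sinh r ^ m := by
  have hsinh_pos : ∀ r ∈ Set.Ioi (0 : ℝ), 0 < Real.sinh r := fun r hr => Real.sinh_pos_iff.2 hr
  have hsinh_rpow_diff : ∀ r > 0, DifferentiableAt ℝ (fun r => Real.sinh r ^ m) r :=
    fun r hr => Real.differentiableAt_sinh.rpow_const (.inl (hsinh_pos r hr).ne')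
  obtain ⟨C, -, hC⟩ := (logDeriv_eqOn_iff (g := fun r => Real.sinh r ^ m)
    (fun r hr => (hΘdiff r hr).differentiableWithinAt)
    (fun r hr => (hsinh_rpow_diff r hr).differentiableWithinAt) isOpen_Ioi isPreconnected_Ioi
    (fun r hr => (Real.rpow_pos_of_pos (hsinh_pos r hr) m).ne')
    (fun r hr => (hΘpos r hr).ne')).1 fun r hr => by
      rw [hode r hr, logDeriv_fun_rpow_const Real.differentiableAt_sinh (hsinh_pos r hr),
        logDeriv_apply, Real.deriv_sinh]
      ring
  exact ⟨C, fun r hr => hC hr⟩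

theorem Real.tendsto_sinh_div_self : Tendsto (fun r => Real.sinh r / r) (𝓝[≠] 0) (𝓝 1) := by
  simpa [div_eq_inv_mul] using hasDerivAt_iff_tendsto_slope_zero.1 (Real.hasDerivAt_sinh 0)

theorem tendsto_const_mul_nhdsGT_zero {a : ℝ} (ha : 0 < a) :
    Tendsto (fun r : ℝ => a * r) (𝓝[>] 0) (𝓝[>] 0) := by
  refine tendsto_nhdsWithin_iff.2 ⟨?_, eventually_nhdsWithin_of_forall fun r hr => ?_⟩
  · simpa using ((continuous_const_mul a).tendsto 0).mono_left nhdsWithin_le_nhds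
  · exact mul_pos ha hr

theorem eq_one_and_eq_zero_of_tendsto_mul_rpow {c d : ℝ}
    (h : Tendsto (fun r : ℝ => c * r ^ d) (𝓝[>] 0) (𝓝 1)) : c = 1 ∧ d = 0 := by
  -- `r ↦ 2 r` preserves `𝓝[>] 0` and multiplies `c r ^ d` by `2 ^ d`, so `2 ^ d = 1`.
  have hscaled : Tendsto (fun r : ℝ => c * (2 * r) ^ d) (𝓝[>] 0) (𝓝 (2 ^ d * 1)) := by
    refine (h.const_mul (2 ^ d)).congr' ?_
    filter_upwards [self_mem_nhdsWithin] with r (hr : 0 < r)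
    rw [Real.mul_rpow zero_le_two hr.le]
    ring
  have hd : d = 0 := by
    have h2d : (2 : ℝ) ^ d = 2 ^ (0 : ℝ) := by
      simpa using tendsto_nhds_unique hscaled (h.comp (tendsto_const_mul_nhdsGT_zero two_pos))
    exact (Real.rpow_right_inj two_pos (by norm_num)).1 h2d
  subst hd
  simpa using h

theorem tendsto_const_mul_rpow_of_eq_mul_sinh_rpow {Θ : ℝ → ℝ} {C m k : ℝ}
    (hΘ : ∀ r > 0, Θ r = C * Real.sinh r ^ m)
    (hlim : Tendsto (fun r => Θ r / r ^ k) (𝓝[>] 0) (𝓝 1)) :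
    Tendsto (fun r : ℝ => C * r ^ (m - k)) (𝓝[>] 0) (𝓝 1) := by
  have hsinh : Tendsto (fun r => (Real.sinh r / r) ^ m) (𝓝[>] 0) (𝓝 1) := by
    simpa using (Real.tendsto_sinh_div_self.mono_left (nhdsGT_le_nhdsNE 0)).rpow_const
      (.inl one_ne_zero)
  have hquot := hlim.div hsinh one_ne_zero
  rw [div_one] at hquot
  refine hquot.congr' ?_
  filter_upwards [self_mem_nhdsWithin] with r (hr : 0 < r)
  have hs : 0 < Real.sinh r := Real.sinh_pos_iff.2 hr
  rw [Pi.div_apply, hΘ r hr, Real.div_rpow hs.le hr.le, Real.rpow_sub hr]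
  field_simp [(Real.rpow_pos_of_pos hs m).ne', (Real.rpow_pos_of_pos hr m).ne']

theorem stmt_7_general (n : ℕ) (lam : ℝ) (Θ : ℝ → ℝ)
    (hΘpos : ∀ r > 0, 0 < Θ r)
    (hΘdiff : ∀ r > 0, DifferentiableAt ℝ Θ r)
    (hode : ∀ r > 0,
      deriv Θ r / Θ r = -(1 + lam) * Real.cosh r / Real.sinh r)
    (hlim : Tendsto (fun r : ℝ => Θ r / r ^ ((n : ℝ) - 1)) (𝓝[>] 0) (𝓝 1)) :
    lam = -n ∧ ∀ r > 0, Θ r = Real.sinh r ^ ((n : ℝ) - 1) := by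
  obtain ⟨C, hC⟩ := exists_eq_const_mul_sinh_rpow_of_logDeriv_eq hΘpos hΘdiff hode
  obtain ⟨rfl, hm⟩ := eq_one_and_eq_zero_of_tendsto_mul_rpow
    (tendsto_const_mul_rpow_of_eq_mul_sinh_rpow hC hlim)
  refine ⟨by linarith, fun r hr => ?_⟩
  simpa [show -(1 + lam) = n - 1 by linarith] using hC r hr

/-- If `Θ > 0` is differentiable on `(0,∞)` with `Θ'/Θ = −(1+λ)·cosh r/sinh r`
and `Θ(r)/r^{n−1} → 1` as `r → 0⁺`, then `λ = −n` and `Θ(r) = (sinh r)^{n−1}`. -/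
theorem stmt_7 (n : ℕ) (hn : 2 ≤ n) (lam : ℝ) (Θ : ℝ → ℝ)
    (hΘpos : ∀ r > 0, 0 < Θ r)
    (hΘdiff : ∀ r > 0, DifferentiableAt ℝ Θ r)
    (hode : ∀ r > 0,
      deriv Θ r / Θ r = -(1 + lam) * Real.cosh r / Real.sinh r)
    (hlim : Tendsto (fun r : ℝ => Θ r / r ^ ((n : ℝ) - 1)) (𝓝[>] 0) (𝓝 1)) :
    lam = -n ∧ ∀ r > 0, Θ r = Real.sinh r ^ ((n : ℝ) - 1) :=
  stmt_7_general n lam Θ hΘpos hΘdiff hode hlim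
end

section
/- Let V be a finite-dimensional real normed vector space, B a nondegenerate symmetric bilinear form on V, c a real number, and φ : ℝ → V a smooth curve whose image spans V. If B(φ(t), φ(s)) = cosh(t−s) + c for all real s, t, then φ'''(t) = φ'(t) for every t ∈ ℝ. -/
private lemma clm_deriv_comm {V : Type*} [NormedAddCommGroup V] [NormedSpace ℝ V]
    (L : V →L[ℝ] ℝ) (f : ℝ → V) (hf : Differentiable ℝ f) :
    deriv (fun t => L (f t)) = fun t => L (deriv f t) :=
  funext fun t => (L.hasFDerivAt.comp_hasDerivAt t (hf t).hasDerivAt).deriv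

private lemma deriv_cosh_shift (s : ℝ) :
    deriv (fun t => Real.cosh (t - s)) = fun t => Real.sinh (t - s) := by
  funext t
  have h : HasDerivAt (fun t : ℝ => Real.cosh (t - s)) (Real.sinh (t - s) * 1) t :=
    by have := (Real.hasDerivAt_cosh (t - s)).comp t ((hasDerivAt_id t).sub_const s); exact this
  simpa using h.deriv

private lemma deriv_sinh_shift (s : ℝ) :
    deriv (fun t => Real.sinh (t - s)) = fun t => Real.cosh (t - s) := by
  funext t
  have h : HasDerivAt (fun t : ℝ => Real.sinh (t - s)) (Real.cosh (t - s) * 1) t :=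
    by have := (Real.hasDerivAt_sinh (t - s)).comp t ((hasDerivAt_id t).sub_const s); exact this
  simpa using h.deriv

/-- If `B` is a nondegenerate symmetric bilinear form on a finite-dimensional
real normed space `V` and `φ : ℝ → V` is a smooth curve whose image spans `V`
with `B(φ(t), φ(s)) = cosh(t−s) + c`, then `φ''' = φ'`. -/
theorem stmt_8 (V : Type*) [NormedAddCommGroup V] [NormedSpace ℝ V]
    [FiniteDimensional ℝ V] (B : LinearMap.BilinForm ℝ V)
    (hBnd : ∀ v : V, (∀ w : V, B v w = 0) → v = 0)
    (hBsymm : ∀ u v : V, B u v = B v u)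
    (c : ℝ) (φ : ℝ → V) (hφ : ContDiff ℝ (⊤ : ℕ∞) φ)
    (hspan : Submodule.span ℝ (Set.range φ) = ⊤)
    (h : ∀ t s : ℝ, B (φ t) (φ s) = Real.cosh (t - s) + c) :
    ∀ t : ℝ, iteratedDeriv 3 φ t = deriv φ t := by
  -- differentiability facts
  have hφ' : ContDiff ℝ ((⊤ : ℕ∞) : WithTop ℕ∞) φ := hφ.of_le (by simp)
  have hφ1 : ContDiff ℝ ((⊤ : ℕ∞) : WithTop ℕ∞) (deriv φ) := (contDiff_infty_iff_deriv.mp hφ').2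
  have hφ2 : ContDiff ℝ ((⊤ : ℕ∞) : WithTop ℕ∞) (deriv (deriv φ)) := (contDiff_infty_iff_deriv.mp hφ1).2
  have hdφ : Differentiable ℝ φ := hφ'.differentiable (by simp)
  have hdφ1 : Differentiable ℝ (deriv φ) := hφ1.differentiable (by simp)
  have hdφ2 : Differentiable ℝ (deriv (deriv φ)) := hφ2.differentiable (by simp)
  intro t
  rw [← sub_eq_zero]
  apply hBnd
  -- reduce to showing B kills the difference against every φ s
  have key : ∀ s : ℝ, B (iteratedDeriv 3 φ t - deriv φ t) (φ s) = 0 := by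
    intro s
    set L : V →L[ℝ] ℝ := (B.flip (φ s)).toContinuousLinearMap with hL
    have hLv : ∀ v : V, L v = B v (φ s) := fun v => rfl
    have h0 : (fun t => L (φ t)) = fun t => Real.cosh (t - s) + c := by
      funext u; rw [hLv, h]
    have h1 : (fun t => L (deriv φ t)) = fun t => Real.sinh (t - s) := by
      rw [← clm_deriv_comm L φ hdφ, h0]
      funext u
      rw [deriv_add_const, deriv_cosh_shift]
    have h2 : (fun t => L (deriv (deriv φ) t)) = fun t => Real.cosh (t - s) := by
      rw [← clm_deriv_comm L (deriv φ) hdφ1, h1, deriv_sinh_shift]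
    have h3 : (fun t => L (deriv (deriv (deriv φ)) t)) = fun t => Real.sinh (t - s) := by
      rw [← clm_deriv_comm L (deriv (deriv φ)) hdφ2, h2, deriv_cosh_shift]
    have h3' : iteratedDeriv 3 φ = deriv (deriv (deriv φ)) := by
      rw [iteratedDeriv_succ, iteratedDeriv_succ, iteratedDeriv_succ, iteratedDeriv_zero]
    have e1 : B (iteratedDeriv 3 φ t) (φ s) = Real.sinh (t - s) := by
      rw [← hLv, h3']; exact congrFun h3 t
    have e2 : B (deriv φ t) (φ s) = Real.sinh (t - s) := by
      rw [← hLv]; exact congrFun h1 t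
    rw [map_sub, LinearMap.sub_apply, e1, e2, sub_self]
  -- extend from range φ to all of V via the span
  intro w
  have hw : w ∈ Submodule.span ℝ (Set.range φ) := hspan ▸ Submodule.mem_top
  induction hw using Submodule.span_induction with
  | mem x hx => obtain ⟨s, rfl⟩ := hx; exact key s
  | zero => simp
  | add x y _ _ hx hy => rw [map_add, hx, hy, add_zero]
  | smul a x _ hx => rw [map_smul, smul_eq_mul, hx, mul_zero]
end
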